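/- Let H_L^ω = Δ_L + V_L^ω be the finite-volume discrete Schrödinger operator on ℓ²(Λ_L) with V^ω(n) = ω_n/(1+|n|)^α, where (ω_n) are i.i.d. with density (δ/2)|x|^{-(1+δ)} for |x|>1 and 0 < αδ < d. With Γ_L = (2L+1)^{(d−αδ)/δ} and b = lim_L Γ_L^{-δ}∑_{n∈Λ_L}(1+|n|)^{-αδ}, the largest eigenvalue E_L^max of H_L^ω satisfies: lim_{L→∞} P(E_L^max/Γ_L ≤ x) = exp(−b/(2x^δ)) for x > 0 and = 0 for x ≤ 0. -/

import Mathlib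

open MeasureTheory ProbabilityTheory Filter

/-- The cube Λ_L = {n ∈ ℤ^d : |n_i| ≤ L for all i}. -/
noncomputable def cube (d L : ℕ) : Finset (Fin d → ℤ) :=
  Finset.Icc (fun _ => -(L : ℤ)) (fun _ => (L : ℤ))

/-- Finite-volume discrete Laplacian Δ_L on ℓ²(Λ_L). -/
noncomputable def lapMat (d L : ℕ) : Matrix (cube d L) (cube d L) ℝ :=
  fun n m => if (∑ i, |(n : Fin d → ℤ) i - (m : Fin d → ℤ) i|) = 1 then 1 else 0

/-- Finite-volume decaying potential V_L, diagonal with entries v(n)/(1+|n|)^α. -/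
noncomputable def potMat (d L : ℕ) (α : ℝ) (v : (Fin d → ℤ) → ℝ) :
    Matrix (cube d L) (cube d L) ℝ :=
  Matrix.diagonal (fun n => v n / (1 + ‖(n : Fin d → ℤ)‖) ^ α)

/-!
Weyl's inequality sandwiches the largest eigenvalue `E_L` of `Δ_L + V_L` between
`M_L = max_n ω_n / (1 + |n|)^α` and `M_L + 2d`: every diagonal entry of a symmetric matrix is at
most its top eigenvalue, and Gershgorin's theorem bounds the top eigenvalue by the largest
diagonal entry plus the off-diagonal row sums, which for `Δ_L` are at most `2d`. Since
`Γ_L → ∞`, the shift `2d` disappears after dividing by `Γ_L`. By independence,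
`P(M_L ≤ t) = ∏_n (1 - t^{-δ} (1 + |n|)^{-αδ} / 2)`; for `t ~ x Γ_L` the factors are uniformly
small and their sum tends to `b / (2 x^δ)`, so the product tends to `exp (-b / (2 x^δ))`.
For `x ≤ 0` the event forces `M_L ≤ 0`, and `P(M_L ≤ 1) → 0` because
`∑_n (1 + |n|)^{-αδ} ≥ (2L + 1)^{d - αδ} → ∞`.
-/

open Finset Real Topology

namespace Matrix.IsHermitian

variable {ι : Type*} [Fintype ι] [DecidableEq ι] {A : Matrix ι ι ℝ}

lemma apply_self_eq_sum_eigenvalues_mul_sq (hA : A.IsHermitian) (k : ι) :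
    A k k = ∑ i, hA.eigenvalues i * hA.eigenvectorUnitary k i ^ 2 := by
  conv_lhs => rw [hA.spectral_theorem]
  simp only [Unitary.conjStarAlgAut_apply, mul_apply, diagonal_apply]
  simp [sq, mul_comm, mul_left_comm]

lemma sum_eigenvectorUnitary_sq (hA : A.IsHermitian) (k : ι) :
    ∑ i, hA.eigenvectorUnitary k i ^ 2 = 1 := by
  simpa [mul_apply, sq] using congr_fun₂ (Unitary.coe_mul_star_self hA.eigenvectorUnitary) k k

lemma apply_self_le_sup'_eigenvalues (hA : A.IsHermitian) (hne : (univ : Finset ι).Nonempty)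
    (k : ι) : A k k ≤ univ.sup' hne hA.eigenvalues := by
  rw [hA.apply_self_eq_sum_eigenvalues_mul_sq k]
  calc ∑ i, hA.eigenvalues i * hA.eigenvectorUnitary k i ^ 2
      ≤ ∑ i, univ.sup' hne hA.eigenvalues * hA.eigenvectorUnitary k i ^ 2 :=
        sum_le_sum fun i _ => mul_le_mul_of_nonneg_right (le_sup' _ (mem_univ i)) (sq_nonneg _)
    _ = univ.sup' hne hA.eigenvalues := by rw [← mul_sum, hA.sum_eigenvectorUnitary_sq, mul_one]

lemma sup'_eigenvalues_le_of_gershgorin (hA : A.IsHermitian) (hne : (univ : Finset ι).Nonempty)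
    {c : ℝ} (hc : ∀ k, A k k + ∑ j ∈ univ.erase k, |A k j| ≤ c) :
    univ.sup' hne hA.eigenvalues ≤ c := by
  refine sup'_le _ _ fun i _ => ?_
  have hμ : Module.End.HasEigenvalue (toLin' A) (hA.eigenvalues i) := by
    rw [Module.End.hasEigenvalue_iff_mem_spectrum, spectrum_toLin']
    exact hA.eigenvalues_mem_spectrum_real i
  obtain ⟨k, hk⟩ := eigenvalue_mem_ball hμ
  simp only [Real.norm_eq_abs, Metric.mem_closedBall, Real.dist_eq] at hk
  linarith [(abs_le.1 hk).2, hc k]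

end Matrix.IsHermitian

lemma exists_eq_add_single_of_sum_abs_sub_eq_one {d : ℕ} {n m : Fin d → ℤ}
    (h : ∑ i, |n i - m i| = 1) : ∃ i, ∃ u ∈ ({1, -1} : Finset ℤ), m = n + Pi.single i u := by
  obtain ⟨i, hi⟩ : ∃ i, n i ≠ m i := by
    by_contra! h'
    simp [h'] at h
  rw [← add_sum_erase _ _ (mem_univ i)] at h
  have hi1 : 1 ≤ |n i - m i| := Int.one_le_abs (sub_ne_zero.2 hi)
  have hrest : ∀ j ∈ univ.erase i, |n j - m j| = 0 := fun j hj =>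
    le_antisymm ((single_le_sum (fun k _ => abs_nonneg (n k - m k)) hj).trans (by omega))
      (abs_nonneg _)
  have hnn : 0 ≤ ∑ j ∈ univ.erase i, |n j - m j| := sum_nonneg fun j _ => abs_nonneg _
  refine ⟨i, m i - n i, ?_, funext fun j => ?_⟩
  · rcases abs_eq (zero_le_one' ℤ) |>.1 (by rw [abs_sub_comm]; omega : |m i - n i| = 1)
      with h' | h' <;> simp [h']
  · by_cases hj : j = i
    · subst hj; simp
    · have := hrest j (mem_erase.2 ⟨hj, mem_univ j⟩)
      rw [abs_eq_zero, sub_eq_zero] at this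
      simp [hj, this]

lemma lapMat_offDiag_row_sum_le (d L : ℕ) (n : cube d L) :
    ∑ m ∈ univ.erase n, |lapMat d L n m| ≤ 2 * d := by
  set nbrs := univ.filter fun m : cube d L => ∑ i, |(n : Fin d → ℤ) i - (m : Fin d → ℤ) i| = 1
  have hsub : nbrs.map (Function.Embedding.subtype _) ⊆
      (univ ×ˢ ({1, -1} : Finset ℤ)).image fun p => (n : Fin d → ℤ) + Pi.single p.1 p.2 := by
    intro x hx
    obtain ⟨m, hm, rfl⟩ := mem_map.1 hx
    obtain ⟨i, u, hu, he⟩ := exists_eq_add_single_of_sum_abs_sub_eq_one (mem_filter.1 hm).2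
    exact mem_image.2 ⟨(i, u), mem_product.2 ⟨mem_univ i, hu⟩, he.symm⟩
  have hcard : #nbrs ≤ 2 * d := by
    calc #nbrs = #(nbrs.map (Function.Embedding.subtype _)) := (card_map _).symm
      _ ≤ #(univ ×ˢ ({1, -1} : Finset ℤ)) := (card_le_card hsub).trans card_image_le
      _ = 2 * d := by simp [mul_comm]
  calc ∑ m ∈ univ.erase n, |lapMat d L n m| ≤ ∑ m, |lapMat d L n m| :=
        sum_le_sum_of_subset_of_nonneg (erase_subset _ _) fun _ _ _ => abs_nonneg _
    _ = #nbrs := by simp [lapMat, apply_ite, nbrs, sum_boole]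
    _ ≤ 2 * d := by exact_mod_cast hcard

section Schrodinger

variable {d L : ℕ} {α : ℝ} {v : (Fin d → ℤ) → ℝ}

lemma lapMat_add_potMat_apply_self (n : cube d L) :
    (lapMat d L + potMat d L α v) n n = v n / (1 + ‖(n : Fin d → ℤ)‖) ^ α := by
  simp [lapMat, potMat]

lemma forall_le_of_sup'_eigenvalues_le (hH : (lapMat d L + potMat d L α v).IsHermitian)
    (hne : (univ : Finset (cube d L)).Nonempty) {c : ℝ} (hc : univ.sup' hne hH.eigenvalues ≤ c) :
    ∀ n ∈ cube d L, v n ≤ c * (1 + ‖n‖) ^ α := by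
  intro n hn
  rw [← div_le_iff₀ (by positivity)]
  calc v n / (1 + ‖n‖) ^ α = (lapMat d L + potMat d L α v) ⟨n, hn⟩ ⟨n, hn⟩ :=
        (lapMat_add_potMat_apply_self ⟨n, hn⟩).symm
    _ ≤ c := (hH.apply_self_le_sup'_eigenvalues hne _).trans hc

lemma sup'_eigenvalues_le_of_forall_le (hH : (lapMat d L + potMat d L α v).IsHermitian)
    (hne : (univ : Finset (cube d L)).Nonempty) {c : ℝ}
    (hv : ∀ n ∈ cube d L, v n ≤ (c - 2 * d) * (1 + ‖n‖) ^ α) :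
    univ.sup' hne hH.eigenvalues ≤ c := by
  refine hH.sup'_eigenvalues_le_of_gershgorin hne fun k => ?_
  have hoff : ∑ j ∈ univ.erase k, |(lapMat d L + potMat d L α v) k j| =
      ∑ j ∈ univ.erase k, |lapMat d L k j| :=
    sum_congr rfl fun j hj => by simp [potMat, Matrix.diagonal_apply_ne _ (ne_of_mem_erase hj).symm]
  have hk := hv k k.2
  rw [← div_le_iff₀ (by positivity)] at hk
  rw [lapMat_add_potMat_apply_self, hoff]
  linarith [lapMat_offDiag_row_sum_le d L k]

end Schrodinger

lemma exp_neg_div_le_one_sub {a ε : ℝ} (ha : 0 ≤ a) (haε : a ≤ ε) (hε : ε < 1) :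
    exp (-(a / (1 - ε))) ≤ 1 - a := by
  have h1a : 0 < 1 - a := by linarith
  calc exp (-(a / (1 - ε))) ≤ exp (-(a / (1 - a))) :=
        exp_le_exp.2 <| neg_le_neg <| div_le_div_of_nonneg_left ha (by linarith) (by linarith)
    _ = (exp (a / (1 - a)))⁻¹ := exp_neg _
    _ ≤ (a / (1 - a) + 1)⁻¹ := inv_anti₀ (by positivity) (add_one_le_exp _)
    _ = 1 - a := by field_simp; ring

lemma prod_one_sub_le_exp_neg_sum {ι : Type*} (s : Finset ι) {a : ι → ℝ} (ha : ∀ n ∈ s, a n ≤ 1) :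
    ∏ n ∈ s, (1 - a n) ≤ exp (-∑ n ∈ s, a n) := by
  rw [← sum_neg_distrib, exp_sum]
  exact prod_le_prod (fun n hn => by linarith [ha n hn]) fun n _ => one_sub_le_exp_neg (a n)

lemma exp_neg_sum_div_le_prod_one_sub {ι : Type*} (s : Finset ι) {a : ι → ℝ} {ε : ℝ}
    (ha : ∀ n ∈ s, 0 ≤ a n) (haε : ∀ n ∈ s, a n ≤ ε) (hε : ε < 1) :
    exp (-∑ n ∈ s, a n / (1 - ε)) ≤ ∏ n ∈ s, (1 - a n) := by
  rw [← sum_neg_distrib, exp_sum]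
  exact prod_le_prod (fun n _ => (exp_pos _).le) fun n hn =>
    exp_neg_div_le_one_sub (ha n hn) (haε n hn) hε

lemma tendsto_prod_one_sub_of_tendsto_sum {ι : Type*} (s : ℕ → Finset ι) (a : ℕ → ι → ℝ)
    {ε : ℕ → ℝ} {c : ℝ} (ha : ∀ᶠ L in atTop, ∀ n ∈ s L, 0 ≤ a L n ∧ a L n ≤ ε L)
    (hε : Tendsto ε atTop (𝓝 0)) (hsum : Tendsto (fun L => ∑ n ∈ s L, a L n) atTop (𝓝 c)) :
    Tendsto (fun L => ∏ n ∈ s L, (1 - a L n)) atTop (𝓝 (exp (-c))) := by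
  have hlower : Tendsto (fun L => exp (-∑ n ∈ s L, a L n / (1 - ε L))) atTop (𝓝 (exp (-c))) := by
    have hε' : Tendsto (fun L => 1 - ε L) atTop (𝓝 1) := by
      simpa using tendsto_const_nhds.sub hε
    simp_rw [← sum_div]
    simpa using ((hsum.div hε' one_ne_zero).neg).rexp
  refine tendsto_of_tendsto_of_tendsto_of_le_of_le' hlower hsum.neg.rexp ?_ ?_ <;>
    filter_upwards [ha, hε.eventually (gt_mem_nhds one_pos)] with L hL hε1
  · exact exp_neg_sum_div_le_prod_one_sub _ (fun n hn => (hL n hn).1) (fun n hn => (hL n hn).2) hε1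
  · exact prod_one_sub_le_exp_neg_sum _ fun n hn => (hL n hn).2.trans hε1.le

lemma tendsto_prod_one_sub_of_tendsto_sum_atTop {ι : Type*} (s : ℕ → Finset ι) {a : ι → ℝ}
    (ha : ∀ n, a n ≤ 1) (hsum : Tendsto (fun L => ∑ n ∈ s L, a n) atTop atTop) :
    Tendsto (fun L => ∏ n ∈ s L, (1 - a n)) atTop (𝓝 0) :=
  tendsto_of_tendsto_of_tendsto_of_le_of_le tendsto_const_nhds
    (tendsto_exp_atBot.comp (tendsto_neg_atTop_atBot.comp hsum))
    (fun _ => prod_nonneg fun n _ => sub_nonneg.2 (ha n))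
    (fun _ => prod_one_sub_le_exp_neg_sum _ fun n _ => ha n)

lemma card_cube (d L : ℕ) : #(cube d L) = (2 * L + 1) ^ d := by
  rw [cube, Pi.card_Icc]
  simp [Int.card_Icc]
  congr 1
  omega

lemma norm_le_of_mem_cube {d L : ℕ} {n : Fin d → ℤ} (hn : n ∈ cube d L) : ‖n‖ ≤ L := by
  rw [cube, Finset.mem_Icc] at hn
  refine (pi_norm_le_iff_of_nonneg L.cast_nonneg).2 fun i => ?_
  rw [Int.norm_eq_abs, ← Int.cast_abs]
  exact_mod_cast abs_le.2 ⟨hn.1 i, hn.2 i⟩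

lemma tendsto_two_mul_add_one_atTop : Tendsto (fun L : ℕ => 2 * (L : ℝ) + 1) atTop atTop :=
  tendsto_atTop_add_const_right _ _ <| tendsto_natCast_atTop_atTop.const_mul_atTop two_pos

lemma rpow_sub_le_sum_cube (d L : ℕ) {β : ℝ} (hβ : 0 ≤ β) :
    (2 * (L : ℝ) + 1) ^ ((d : ℝ) - β) ≤ ∑ n ∈ cube d L, (1 + ‖n‖) ^ (-β) := by
  have hL : (0 : ℝ) < 2 * L + 1 := by positivity
  calc (2 * (L : ℝ) + 1) ^ ((d : ℝ) - β) = ∑ _n ∈ cube d L, (2 * (L : ℝ) + 1) ^ (-β) := by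
        rw [sum_const, card_cube, nsmul_eq_mul, sub_eq_add_neg, rpow_add hL, rpow_natCast]
        push_cast; rfl
    _ ≤ ∑ n ∈ cube d L, (1 + ‖n‖) ^ (-β) := sum_le_sum fun n hn =>
        rpow_le_rpow_of_nonpos (by positivity)
          (by linarith [norm_le_of_mem_cube hn, L.cast_nonneg (α := ℝ)]) (neg_nonpos.2 hβ)

lemma tendsto_sum_cube_atTop {d : ℕ} {β : ℝ} (hβ : 0 ≤ β) (hβd : β < d) :
    Tendsto (fun L : ℕ => ∑ n ∈ cube d L, (1 + ‖n‖) ^ (-β)) atTop atTop :=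
  tendsto_atTop_mono (fun L => rpow_sub_le_sum_cube d L hβ)
    ((tendsto_rpow_atTop (sub_pos.2 hβd)).comp tendsto_two_mul_add_one_atTop)

/-- The normalisation `Γ_L`. -/
noncomputable def cubeScale (d : ℕ) (α δ : ℝ) (L : ℕ) : ℝ :=
  (2 * (L : ℝ) + 1) ^ (((d : ℝ) - α * δ) / δ)

lemma cubeScale_pos (d : ℕ) (α δ : ℝ) (L : ℕ) : 0 < cubeScale d α δ L := by
  unfold cubeScale; positivity

lemma tendsto_cubeScale_atTop {d : ℕ} {α δ : ℝ} (hδ : 0 < δ) (hαδ : α * δ < d) :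
    Tendsto (cubeScale d α δ) atTop atTop :=
  (tendsto_rpow_atTop (div_pos (sub_pos.2 hαδ) hδ)).comp tendsto_two_mul_add_one_atTop

open Set

noncomputable def twoSidedPareto (δ : ℝ) : Measure ℝ :=
  volume.withDensity fun t => ENNReal.ofReal (if 1 < |t| then δ / 2 * |t| ^ (-(1 + δ)) else 0)

lemma twoSidedPareto_Ioi {δ t : ℝ} (hδ : 0 < δ) (ht : 1 ≤ t) :
    twoSidedPareto δ (Ioi t) = ENNReal.ofReal (t ^ (-δ) / 2) := by
  have ht0 : 0 < t := one_pos.trans_le ht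
  have hexp : -(1 + δ) < -1 := by linarith
  have hdens : ∀ s ∈ Ioi t, ENNReal.ofReal (if 1 < |s| then δ / 2 * |s| ^ (-(1 + δ)) else 0) =
      ENNReal.ofReal (δ / 2 * s ^ (-(1 + δ))) := fun s hs => by
    have hs1 : 1 < s := ht.trans_lt hs
    rw [abs_of_pos (one_pos.trans hs1), if_pos hs1]
  have hnn : 0 ≤ᵐ[volume.restrict (Ioi t)] fun s => δ / 2 * s ^ (-(1 + δ)) :=
    (ae_restrict_iff' measurableSet_Ioi).2 <| Eventually.of_forall fun s hs =>
      by have : 0 < s := ht0.trans hs; positivity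
  rw [twoSidedPareto, withDensity_apply _ measurableSet_Ioi,
    setLIntegral_congr_fun measurableSet_Ioi hdens,
    ← ofReal_integral_eq_lintegral_ofReal ((integrableOn_Ioi_rpow_of_lt hexp ht0).const_mul _) hnn,
    integral_const_mul, integral_Ioi_rpow_of_lt hexp ht0]
  congr 1
  rw [show -(1 + δ) + 1 = -δ by ring]
  field_simp

lemma tendsto_mul_cubeScale_sub_div {d : ℕ} {α δ : ℝ} (hδ : 0 < δ) (hαδ : α * δ < d) (x c : ℝ) :
    Tendsto (fun L => (x * cubeScale d α δ L - c) / cubeScale d α δ L) atTop (𝓝 x) := by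
  have hΓ := cubeScale_pos d α δ
  have := tendsto_const_nhds (x := x).sub
    (tendsto_const_nhds (x := c).div_atTop (tendsto_cubeScale_atTop hδ hαδ))
  rw [sub_zero] at this
  exact this.congr fun L => by rw [sub_div, mul_div_cancel_right₀ _ (hΓ L).ne']

section Probability

variable {Ω : Type*} [MeasurableSpace Ω] {P : Measure Ω} [IsProbabilityMeasure P] {δ : ℝ}

lemma probReal_le_of_map_eq_twoSidedPareto {Y : Ω → ℝ} (hY : Measurable Y)
    (hlaw : P.map Y = twoSidedPareto δ) (hδ : 0 < δ) {t : ℝ} (ht : 1 ≤ t) :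
    P.real {ω | Y ω ≤ t} = 1 - t ^ (-δ) / 2 := by
  have : IsProbabilityMeasure (twoSidedPareto δ) :=
    hlaw ▸ Measure.isProbabilityMeasure_map hY.aemeasurable
  calc P.real {ω | Y ω ≤ t} = (twoSidedPareto δ).real (Ioi t)ᶜ := by
        rw [← hlaw, map_measureReal_apply hY measurableSet_Ioi.compl, compl_Ioi]; rfl
    _ = 1 - t ^ (-δ) / 2 := by
        rw [probReal_compl_eq_one_sub measurableSet_Ioi, measureReal_def, twoSidedPareto_Ioi hδ ht,
          ENNReal.toReal_ofReal (by positivity)]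

lemma probReal_forall_le_eq_prod {ι : Type*} {X : ι → Ω → ℝ} (hX : ∀ n, Measurable (X n))
    (hind : iIndepFun X P) (hlaw : ∀ n, P.map (X n) = twoSidedPareto δ) (hδ : 0 < δ)
    (s : Finset ι) {c : ι → ℝ} (hc : ∀ n ∈ s, 1 ≤ c n) :
    P.real {ω | ∀ n ∈ s, X n ω ≤ c n} = ∏ n ∈ s, (1 - c n ^ (-δ) / 2) := by
  have hset : {ω | ∀ n ∈ s, X n ω ≤ c n} = ⋂ n ∈ s, X n ⁻¹' Iic (c n) := by ext; simp
  rw [hset, measureReal_def, hind.meas_biInter fun n _ => ⟨Iic (c n), measurableSet_Iic, rfl⟩,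
    ENNReal.toReal_prod]
  exact prod_congr rfl fun n hn => probReal_le_of_map_eq_twoSidedPareto (hX n) (hlaw n) hδ (hc n hn)

lemma probReal_forall_le_mul_eq_prod {E : Type*} [SeminormedAddGroup E] {X : E → Ω → ℝ}
    (hX : ∀ n, Measurable (X n)) (hind : iIndepFun X P) (hlaw : ∀ n, P.map (X n) = twoSidedPareto δ)
    (hδ : 0 < δ) (s : Finset E) {α t : ℝ} (hα : 0 ≤ α) (ht : 1 ≤ t) :
    P.real {ω | ∀ n ∈ s, X n ω ≤ t * (1 + ‖n‖) ^ α} =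
      ∏ n ∈ s, (1 - t ^ (-δ) * (1 + ‖n‖) ^ (-(α * δ)) / 2) := by
  have hc : ∀ n ∈ s, 1 ≤ t * (1 + ‖n‖) ^ α := fun n _ =>
    one_le_mul_of_one_le_of_one_le ht (one_le_rpow (by simp) hα)
  rw [probReal_forall_le_eq_prod hX hind hlaw hδ s hc]
  refine prod_congr rfl fun n _ => ?_
  rw [mul_rpow (by linarith) (by positivity), ← rpow_mul (by positivity), neg_mul_eq_mul_neg]

lemma tendsto_probReal_forall_le_mul_cube {d : ℕ} {α b x : ℝ} (hα : 0 ≤ α) (hδ : 0 < δ)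
    (hαδ : α * δ < d) {X : (Fin d → ℤ) → Ω → ℝ} (hX : ∀ n, Measurable (X n))
    (hind : iIndepFun X P) (hlaw : ∀ n, P.map (X n) = twoSidedPareto δ)
    (hb : Tendsto (fun L => cubeScale d α δ L ^ (-δ) * ∑ n ∈ cube d L, (1 + ‖n‖) ^ (-(α * δ)))
      atTop (𝓝 b))
    (hx : 0 < x) {t : ℕ → ℝ} (ht : Tendsto (fun L => t L / cubeScale d α δ L) atTop (𝓝 x)) :
    Tendsto (fun L => P.real {ω | ∀ n ∈ cube d L, X n ω ≤ t L * (1 + ‖n‖) ^ α}) atTop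
      (𝓝 (exp (-(b / (2 * x ^ δ))))) := by
  have hΓ := cubeScale_pos d α δ
  have ht_top : Tendsto t atTop atTop :=
    (ht.pos_mul_atTop hx (tendsto_cubeScale_atTop hδ hαδ)).congr fun L =>
      div_mul_cancel₀ (t L) (hΓ L).ne'
  have ht1 : ∀ᶠ L in atTop, 1 ≤ t L := ht_top.eventually_ge_atTop 1
  have hw : ∀ n : Fin d → ℤ, 0 ≤ (1 + ‖n‖) ^ (-(α * δ)) ∧ (1 + ‖n‖) ^ (-(α * δ)) ≤ 1 :=
    fun n => ⟨by positivity, rpow_le_one_of_one_le_of_nonpos (by simp) (by nlinarith)⟩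
  have hsum : Tendsto (fun L => ∑ n ∈ cube d L, t L ^ (-δ) * (1 + ‖n‖) ^ (-(α * δ)) / 2) atTop
      (𝓝 (x ^ (-δ) / 2 * b)) := by
    refine (((ht.rpow_const (Or.inl hx.ne')).div_const 2).mul hb).congr' ?_
    filter_upwards [ht1] with L hL
    rw [← sum_div, ← mul_sum, div_rpow (by linarith) (hΓ L).le]
    field_simp [(rpow_pos_of_pos (hΓ L) (-δ)).ne']
  have hlim := tendsto_prod_one_sub_of_tendsto_sum (fun L => cube d L) _
    (ε := fun L => t L ^ (-δ) / 2) ?_ ?_ hsum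
  · rw [show b / (2 * x ^ δ) = x ^ (-δ) / 2 * b by rw [rpow_neg hx.le]; field_simp]
    refine hlim.congr' ?_
    filter_upwards [ht1] with L hL
    exact (probReal_forall_le_mul_eq_prod hX hind hlaw hδ _ hα hL).symm
  · filter_upwards [ht1] with L hL n _
    have : 0 ≤ t L ^ (-δ) := rpow_nonneg (by linarith) _
    constructor <;> nlinarith [hw n]
  · simpa using ((tendsto_rpow_neg_atTop hδ).comp ht_top).div_const 2

lemma tendsto_probReal_forall_le_cube_zero {d : ℕ} {α : ℝ} (hα : 0 ≤ α) (hδ : 0 < δ)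
    (hαδ : α * δ < d) {X : (Fin d → ℤ) → Ω → ℝ} (hX : ∀ n, Measurable (X n))
    (hind : iIndepFun X P) (hlaw : ∀ n, P.map (X n) = twoSidedPareto δ) :
    Tendsto (fun L => P.real {ω | ∀ n ∈ cube d L, X n ω ≤ (1 + ‖n‖) ^ α}) atTop (𝓝 0) := by
  have hαδ₀ : 0 ≤ α * δ := mul_nonneg hα hδ.le
  have hw (n : Fin d → ℤ) : (1 + ‖n‖) ^ (-(α * δ)) / 2 ≤ 1 := by
    have := rpow_le_one_of_one_le_of_nonpos (by simp : (1 : ℝ) ≤ 1 + ‖n‖) (neg_nonpos.2 hαδ₀)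
    linarith
  have hsum : Tendsto (fun L => ∑ n ∈ cube d L, (1 + ‖n‖) ^ (-(α * δ)) / 2) atTop atTop := by
    simpa only [← sum_div] using (tendsto_sum_cube_atTop hαδ₀ hαδ).atTop_div_const two_pos
  refine (tendsto_prod_one_sub_of_tendsto_sum_atTop (fun L => cube d L) hw hsum).congr fun L => ?_
  simpa using (probReal_forall_le_mul_eq_prod hX hind hlaw hδ (cube d L) hα le_rfl).symm

end Probability

theorem max_eigenvalue_asymptotics_general {Ω : Type*} [MeasurableSpace Ω]
    (P : Measure Ω) [IsProbabilityMeasure P]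
    (d : ℕ) (α δ b : ℝ) (hα : 0 < α) (hδ : 0 < δ)
    (h2 : α * δ < d)
    (X : (Fin d → ℤ) → Ω → ℝ) (hmeas : ∀ n, Measurable (X n))
    (hindep : iIndepFun X P)
    (hdist : ∀ n, Measure.map (X n) P =
      volume.withDensity
        (fun t => ENNReal.ofReal (if 1 < |t| then δ / 2 * |t| ^ (-(1 + δ)) else 0)))
    (hb : Tendsto
      (fun L : ℕ =>
        ((2 * (L : ℝ) + 1) ^ (((d : ℝ) - α * δ) / δ)) ^ (-δ) *
          ∑ n ∈ cube d L, (1 + ‖n‖) ^ (-(α * δ)))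
      atTop (nhds b))
    (hH : ∀ (ω : Ω) (L : ℕ), (lapMat d L + potMat d L α (fun n => X n ω)).IsHermitian)
    (hne : ∀ L : ℕ, (Finset.univ : Finset ↥(cube d L)).Nonempty)
    (x : ℝ) :
    Tendsto
      (fun L : ℕ =>
        (P {ω | (Finset.univ.sup' (hne L) fun j => (hH ω L).eigenvalues j) /
            (2 * (L : ℝ) + 1) ^ (((d : ℝ) - α * δ) / δ) ≤ x}).toReal)
      atTop (nhds (if 0 < x then Real.exp (-(b / (2 * x ^ δ))) else 0)) := by
  change Tendsto (fun L =>
    P.real {ω | univ.sup' (hne L) (hH ω L).eigenvalues / cubeScale d α δ L ≤ x}) atTop _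
  have hΓ := cubeScale_pos d α δ
  split_ifs with hx
  · refine tendsto_of_tendsto_of_tendsto_of_le_of_le
      (tendsto_probReal_forall_le_mul_cube hα.le hδ h2 hmeas hindep hdist hb hx
        (tendsto_mul_cubeScale_sub_div hδ h2 x (2 * d)))
      (tendsto_probReal_forall_le_mul_cube hα.le hδ h2 hmeas hindep hdist hb hx
        (by simpa using tendsto_mul_cubeScale_sub_div hδ h2 x 0))
      (fun L => measureReal_mono fun ω hω => ?_) (fun L => measureReal_mono fun ω hω => ?_)
    · rw [mem_ofPred_eq, div_le_iff₀ (hΓ L)]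
      exact sup'_eigenvalues_le_of_forall_le _ _ hω
    · rw [mem_ofPred_eq, div_le_iff₀ (hΓ L)] at hω
      simpa using forall_le_of_sup'_eigenvalues_le _ _ hω
  · refine tendsto_of_tendsto_of_tendsto_of_le_of_le tendsto_const_nhds
      (tendsto_probReal_forall_le_cube_zero hα.le hδ h2 hmeas hindep hdist)
      (fun _ => measureReal_nonneg) fun L => measureReal_mono fun ω hω => ?_
    rw [mem_ofPred_eq, div_le_iff₀ (hΓ L)] at hω
    simpa using forall_le_of_sup'_eigenvalues_le (c := 1) _ _ (by nlinarith [hΓ L])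

/-- Fréchet-type limit for the largest eigenvalue E_L^max of H_L^ω = Δ_L + V_L^ω:
P(E_L^max/Γ_L ≤ x) → exp(-b/(2x^δ)) for x > 0, and → 0 for x ≤ 0. -/
theorem max_eigenvalue_asymptotics {Ω : Type*} [MeasurableSpace Ω]
    (P : Measure Ω) [IsProbabilityMeasure P]
    (d : ℕ) (hd : 1 ≤ d) (α δ b : ℝ) (hα : 0 < α) (hδ : 0 < δ)
    (h1 : 0 < α * δ) (h2 : α * δ < d)
    (X : (Fin d → ℤ) → Ω → ℝ) (hmeas : ∀ n, Measurable (X n))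
    (hindep : iIndepFun X P)
    (hdist : ∀ n, Measure.map (X n) P =
      volume.withDensity
        (fun t => ENNReal.ofReal (if 1 < |t| then δ / 2 * |t| ^ (-(1 + δ)) else 0)))
    (hb : Tendsto
      (fun L : ℕ =>
        ((2 * (L : ℝ) + 1) ^ (((d : ℝ) - α * δ) / δ)) ^ (-δ) *
          ∑ n ∈ cube d L, (1 + ‖n‖) ^ (-(α * δ)))
      atTop (nhds b))
    (hH : ∀ (ω : Ω) (L : ℕ), (lapMat d L + potMat d L α (fun n => X n ω)).IsHermitian)
    (hne : ∀ L : ℕ, (Finset.univ : Finset ↥(cube d L)).Nonempty)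
    (x : ℝ) :
    Tendsto
      (fun L : ℕ =>
        (P {ω | (Finset.univ.sup' (hne L) fun j => (hH ω L).eigenvalues j) /
            (2 * (L : ℝ) + 1) ^ (((d : ℝ) - α * δ) / δ) ≤ x}).toReal)
      atTop (nhds (if 0 < x then Real.exp (-(b / (2 * x ^ δ))) else 0)) :=
  max_eigenvalue_asymptotics_general P d α δ b hα hδ h2 X hmeas hindep hdist hb hH hne x
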